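/- arXiv:1609.08177 — 7 statements merged into one kernel-verified Lean document; each statement's English description precedes it below -/
import Mathlib

section
/- Let f : ℝ^n → ℝ be differentiable with L-Lipschitz gradient, g : ℝ^n → ℝ convex, and F = f + g. Fix x, y ∈ ℝ^n, t > 0, and let p = prox_{tg}(x - t∇f(y)). Then for any z ∈ ℝ^n: F(z) - F(p) ≥ (1/(2t) - L/2)‖p - z‖² + (1/(2t))(‖x - p‖² - ‖x - z‖²) + ⟨p - z, ∇f(y) - ∇f(z)⟩. -/
open scoped RealInnerProductSpace
open Set Filter Topology

/-!
Write `u = x - t∇f(y)`. The smooth part is controlled by the quadratic upper bound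
`f p ≤ f z + ⟪∇f(z), p - z⟫ + (L/2)‖p - z‖²` of an `L`-smooth function, obtained by showing that
`s ↦ f(z + s(p - z)) - s⟪∇f(z), p - z⟫ - (L/2)s²‖p - z‖²` is antitone on `[0, 1]`. The nonsmooth
part is controlled by the optimality condition of the prox step, `(u - p)/t ∈ ∂g(p)`, obtained by
comparing `p` with `p + s(z - p)` and letting `s → 0⁺`. Adding the two inequalities and expanding
`2⟪x - p, z - p⟫ = ‖x - p‖² + ‖p - z‖² - ‖x - z‖²` gives the claim.
-/

section QuadraticUpperBound

variable {E : Type*} [NormedAddCommGroup E]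

theorem image_le_add_fderiv_add_sq_of_lipschitz [NormedSpace ℝ E] {f : E → ℝ}
    {f' : E → E →L[ℝ] ℝ} {L : ℝ} (hf : ∀ x, HasFDerivAt f (f' x) x)
    (hlip : ∀ x y, ‖f' x - f' y‖ ≤ L * ‖x - y‖) (x y : E) :
    f y ≤ f x + f' x (y - x) + L / 2 * ‖y - x‖ ^ 2 := by
  set d := y - x
  let φ : ℝ → ℝ := fun s ↦ f (x + s • d) - s * f' x d - L / 2 * s ^ 2 * ‖d‖ ^ 2
  have hφ : ∀ s, HasDerivAt φ (f' (x + s • d) d - f' x d - L * s * ‖d‖ ^ 2) s := by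
    intro s
    have hline : HasDerivAt (fun s : ℝ ↦ x + s • d) d s := by
      simpa using ((hasDerivAt_id s).smul_const d).const_add x
    refine ((((hf _).comp_hasDerivAt s hline).sub ((hasDerivAt_id s).mul_const (f' x d))).sub
      (((hasDerivAt_pow 2 s).const_mul (L / 2)).mul_const (‖d‖ ^ 2))).congr_deriv ?_
    simp only [Nat.cast_ofNat]
    ring
  have hφ_nonpos : ∀ s ∈ interior (Icc (0 : ℝ) 1),
      f' (x + s • d) d - f' x d - L * s * ‖d‖ ^ 2 ≤ 0 := by
    intro s hs
    rw [interior_Icc] at hs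
    refine sub_nonpos.2 ?_
    calc f' (x + s • d) d - f' x d = (f' (x + s • d) - f' x) d := rfl
      _ ≤ ‖f' (x + s • d) - f' x‖ * ‖d‖ :=
        (le_abs_self _).trans ((f' (x + s • d) - f' x).le_opNorm d)
      _ ≤ L * ‖s • d‖ * ‖d‖ := by gcongr; simpa using hlip (x + s • d) x
      _ = L * s * ‖d‖ ^ 2 := by rw [norm_smul, Real.norm_of_nonneg hs.1.le]; ring
  have hanti : AntitoneOn φ (Icc 0 1) :=
    antitoneOn_of_hasDerivWithinAt_nonpos (convex_Icc 0 1)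
      (fun s _ ↦ (hφ s).continuousAt.continuousWithinAt)
      (fun s _ ↦ (hφ s).hasDerivWithinAt) hφ_nonpos
  have hφ01 := hanti (left_mem_Icc.2 zero_le_one) (right_mem_Icc.2 zero_le_one) zero_le_one
  have hy : x + d = y := add_sub_cancel x y
  simp [φ, hy] at hφ01
  linarith

theorem image_le_add_inner_add_sq_of_lipschitz_gradient [InnerProductSpace ℝ E] [CompleteSpace E]
    {f : E → ℝ} {f' : E → E} {L : ℝ} (hf : ∀ x, HasGradientAt f (f' x) x)
    (hlip : ∀ x y, ‖f' x - f' y‖ ≤ L * ‖x - y‖) (x y : E) :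
    f y ≤ f x + ⟪f' x, y - x⟫ + L / 2 * ‖y - x‖ ^ 2 :=
  image_le_add_fderiv_add_sq_of_lipschitz (fun x ↦ (hf x).hasFDerivAt)
    (fun x y ↦ by rw [← map_sub, LinearIsometryEquiv.norm_map]; exact hlip x y) x y

end QuadraticUpperBound

theorem nonpos_of_forall_le_mul {a c : ℝ} (h : ∀ s, 0 < s → s ≤ 1 → a ≤ s * c) : a ≤ 0 := by
  have hlim : Tendsto (fun s ↦ s * c) (𝓝[>] 0) (𝓝 0) := by
    simpa using ((continuous_mul_const c).tendsto 0).mono_left nhdsWithin_le_nhds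
  refine ge_of_tendsto hlim ?_
  filter_upwards [Ioc_mem_nhdsGT zero_lt_one] with s hs using h s hs.1 hs.2

theorem ConvexOn.add_inner_le_of_minimizes_add_sq {E : Type*} [NormedAddCommGroup E]
    [InnerProductSpace ℝ E] {g : E → ℝ} (hg : ConvexOn ℝ univ g) {u p : E} {t : ℝ}
    (hp : ∀ w, g p + ‖p - u‖ ^ 2 / (2 * t) ≤ g w + ‖w - u‖ ^ 2 / (2 * t)) (z : E) :
    g p + ⟪t⁻¹ • (u - p), z - p⟫ ≤ g z := by
  suffices ∀ s, 0 < s → s ≤ 1 → g p - g z + t⁻¹ * ⟪u - p, z - p⟫ ≤ s * (‖z - p‖ ^ 2 / (2 * t)) by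
    rw [real_inner_smul_left]
    linarith [nonpos_of_forall_le_mul this]
  intro s hs₀ hs₁
  have hconv : g (p + s • (z - p)) ≤ (1 - s) * g p + s * g z := by
    calc g (p + s • (z - p)) = g ((1 - s) • p + s • z) := by congr 1; module
      _ ≤ (1 - s) • g p + s • g z :=
        hg.2 (mem_univ p) (mem_univ z) (sub_nonneg.2 hs₁) hs₀.le (by ring)
      _ = (1 - s) * g p + s * g z := rfl
  have hexpand : ‖p + s • (z - p) - u‖ ^ 2
      = ‖p - u‖ ^ 2 - 2 * s * ⟪u - p, z - p⟫ + s ^ 2 * ‖z - p‖ ^ 2 := by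
    rw [add_sub_right_comm, norm_add_sq_real, real_inner_smul_right, norm_smul, mul_pow,
      Real.norm_eq_abs, sq_abs, ← neg_sub u p, inner_neg_left]
    ring
  have hsplit : (‖p - u‖ ^ 2 - 2 * s * ⟪u - p, z - p⟫ + s ^ 2 * ‖z - p‖ ^ 2) / (2 * t)
      = ‖p - u‖ ^ 2 / (2 * t) - s * (t⁻¹ * ⟪u - p, z - p⟫)
        + s * (s * (‖z - p‖ ^ 2 / (2 * t))) := by
    field_simp
  have hmin := hp (p + s • (z - p))
  rw [hexpand, hsplit] at hmin
  refine le_of_mul_le_mul_left ?_ hs₀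
  linarith

theorem key_lemma_i_general (n : ℕ) (L : ℝ)
    (f : EuclideanSpace ℝ (Fin n) → ℝ) (f' : EuclideanSpace ℝ (Fin n) → EuclideanSpace ℝ (Fin n))
    (hf : ∀ x, HasGradientAt f (f' x) x)
    (hlip : ∀ x y, ‖f' x - f' y‖ ≤ L * ‖x - y‖)
    (g : EuclideanSpace ℝ (Fin n) → ℝ) (hg : ConvexOn ℝ Set.univ g)
    (x y : EuclideanSpace ℝ (Fin n)) (t : ℝ) (ht : 0 < t)
    (p : EuclideanSpace ℝ (Fin n))
    (hp : ∀ w, g p + ‖p - (x - t • f' y)‖ ^ 2 / (2 * t) ≤ g w + ‖w - (x - t • f' y)‖ ^ 2 / (2 * t))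
    (z : EuclideanSpace ℝ (Fin n)) :
    (f z + g z) - (f p + g p) ≥ (1 / (2 * t) - L / 2) * ‖p - z‖ ^ 2
      + (1 / (2 * t)) * (‖x - p‖ ^ 2 - ‖x - z‖ ^ 2) + ⟪p - z, f' y - f' z⟫ := by
  have hf_le := image_le_add_inner_add_sq_of_lipschitz_gradient hf hlip z p
  have hg_le := hg.add_inner_le_of_minimizes_add_sq hp z
  have hsubgrad : t⁻¹ • (x - t • f' y - p) = t⁻¹ • (x - p) - f' y := by
    rw [sub_right_comm, smul_sub, inv_smul_smul₀ ht.ne']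
  have hpolar :
      t⁻¹ * ⟪x - p, z - p⟫ = 1 / (2 * t) * (‖x - p‖ ^ 2 + ‖p - z‖ ^ 2 - ‖x - z‖ ^ 2) := by
    have h := norm_sub_sq_real (x - p) (z - p)
    rw [sub_sub_sub_cancel_right, norm_sub_rev z p] at h
    rw [h]
    ring
  rw [hsubgrad, inner_sub_left, real_inner_smul_left, hpolar] at hg_le
  have hswap : ∀ v, ⟪v, p - z⟫ = -⟪v, z - p⟫ := fun v ↦ by rw [← inner_neg_right, neg_sub]
  rw [inner_sub_right, real_inner_comm (f' y), real_inner_comm (f' z)]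
  linarith [hswap (f' y), hswap (f' z)]

theorem key_lemma_i (n : ℕ) (L : ℝ) (hL : 0 < L)
    (f : EuclideanSpace ℝ (Fin n) → ℝ) (f' : EuclideanSpace ℝ (Fin n) → EuclideanSpace ℝ (Fin n))
    (hf : ∀ x, HasGradientAt f (f' x) x)
    (hlip : ∀ x y, ‖f' x - f' y‖ ≤ L * ‖x - y‖)
    (g : EuclideanSpace ℝ (Fin n) → ℝ) (hg : ConvexOn ℝ Set.univ g)
    (x y : EuclideanSpace ℝ (Fin n)) (t : ℝ) (ht : 0 < t)
    (p : EuclideanSpace ℝ (Fin n))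
    (hp : ∀ w, g p + ‖p - (x - t • f' y)‖ ^ 2 / (2 * t) ≤ g w + ‖w - (x - t • f' y)‖ ^ 2 / (2 * t))
    (z : EuclideanSpace ℝ (Fin n)) :
    (f z + g z) - (f p + g p) ≥ (1 / (2 * t) - L / 2) * ‖p - z‖ ^ 2
      + (1 / (2 * t)) * (‖x - p‖ ^ 2 - ‖x - z‖ ^ 2) + ⟪p - z, f' y - f' z⟫ :=
  key_lemma_i_general n L f f' hf hlip g hg x y t ht p hp z
end

section
/- Let f : ℝ^n → ℝ be differentiable with L-Lipschitz gradient, g : ℝ^n → ℝ convex, and F = f + g. Fix x, y ∈ ℝ^n, t > 0, and let p = prox_{tg}(x - t∇f(y)). Then for any z ∈ ℝ^n: F(z) - F(p) ≥ (1/(2t))(‖x - p‖² + ‖z - p‖² - ‖x - z‖²) + ⟨y - z, ∇f(y)⟩ + f(z) - f(y) - (L/2)‖p - y‖². -/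
/-!
The descent lemma bounds `f p` above by the quadratic model of `f` at `y`, and the first-order
optimality of the proximal point gives `⟪x - t • ∇f(y) - p, z - p⟫ ≤ t (g z - g p)`. Adding the two
and expanding `‖x - z‖²` by polarization around `p` yields the inequality.
-/

open scoped RealInnerProductSpace
open Set Filter Topology

section

variable {E : Type*} [NormedAddCommGroup E] [InnerProductSpace ℝ E]

theorem ConvexOn.inner_sub_le_mul_sub_of_isMinOn_prox {g : E → ℝ} (hg : ConvexOn ℝ univ g)
    {t : ℝ} (ht : 0 < t) {u p : E}
    (hp : IsMinOn (fun w => g w + ‖w - u‖ ^ 2 / (2 * t)) univ p) (z : E) :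
    ⟪u - p, z - p⟫ ≤ t * (g z - g p) := by
  -- Compare `p` with the points `p + s • (z - p)` of the segment and let `s → 0⁺`.
  have hseg : ∀ s ∈ Ioc (0 : ℝ) 1,
      t * (g p - g z) + ⟪u - p, z - p⟫ ≤ s * (‖z - p‖ ^ 2 / 2) := by
    rintro s ⟨hs0, hs1⟩
    have hmin : g p + ‖p - u‖ ^ 2 / (2 * t)
        ≤ g (p + s • (z - p)) + ‖p + s • (z - p) - u‖ ^ 2 / (2 * t) :=
      isMinOn_iff.1 hp _ (mem_univ _)
    have hconv : g (p + s • (z - p)) ≤ (1 - s) * g p + s * g z := by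
      have h := hg.2 (mem_univ p) (mem_univ z) (sub_nonneg.2 hs1) hs0.le (by ring)
      rwa [show (1 - s) • p + s • z = p + s • (z - p) by module] at h
    have hnorm : ‖p + s • (z - p) - u‖ ^ 2
        = ‖p - u‖ ^ 2 + 2 * s * ⟪p - u, z - p⟫ + s ^ 2 * ‖z - p‖ ^ 2 := by
      rw [show p + s • (z - p) - u = (p - u) + s • (z - p) by abel, norm_add_sq_real,
        real_inner_smul_right, norm_smul, mul_pow, Real.norm_eq_abs, sq_abs]
      ring
    rw [hnorm] at hmin
    rw [show u - p = -(p - u) by abel, inner_neg_left]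
    have hscaled : (t * (g p - g z) - ⟪p - u, z - p⟫ - s * (‖z - p‖ ^ 2 / 2)) * s ≤ 0 := by
      field_simp at hmin
      nlinarith
    linarith [nonpos_of_mul_nonpos_left hscaled hs0]
  have hlim : Tendsto (fun s : ℝ => s * (‖z - p‖ ^ 2 / 2)) (𝓝[>] 0) (𝓝 0) :=
    ((continuous_mul_const _).tendsto' 0 0 (zero_mul _)).mono_left nhdsWithin_le_nhds
  have := ge_of_tendsto hlim (eventually_of_mem (Ioc_mem_nhdsGT zero_lt_one) hseg)
  linarith

variable [CompleteSpace E]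

theorem HasGradientAt.hasDerivAt_comp_add_smul {f : E → ℝ} {f' a v : E} {s : ℝ}
    (hf : HasGradientAt f f' (a + s • v)) :
    HasDerivAt (fun s : ℝ => f (a + s • v)) ⟪f', v⟫ s := by
  have hline : HasDerivAt (fun s : ℝ => a + s • v) v s := by
    simpa using ((hasDerivAt_id s).smul_const v).const_add a
  have h := hf.hasFDerivAt.comp_hasDerivAt s hline
  simp only [InnerProductSpace.toDual_apply_apply] at h
  exact h

theorem le_add_inner_add_mul_sq_of_lipschitz_gradient {f : E → ℝ} {f' : E → E} {L : ℝ}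
    (hf : ∀ x, HasGradientAt f (f' x) x) (hlip : ∀ x y, ‖f' x - f' y‖ ≤ L * ‖x - y‖)
    (a b : E) : f b ≤ f a + ⟪f' a, b - a⟫ + L / 2 * ‖b - a‖ ^ 2 := by
  set v := b - a
  have hφ : ∀ s : ℝ, HasDerivAt (fun s : ℝ => f (a + s • v) - s * ⟪f' a, v⟫)
      (⟪f' (a + s • v), v⟫ - ⟪f' a, v⟫) s := fun s =>
    ((hf _).hasDerivAt_comp_add_smul).sub ((hasDerivAt_id s).mul_const _) |>.congr_deriv (by simp)
  have hB : ∀ s : ℝ, HasDerivAt (fun s : ℝ => f a + L / 2 * ‖v‖ ^ 2 * s ^ 2)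
      (L * s * ‖v‖ ^ 2) s := fun s =>
    ((hasDerivAt_pow 2 s).const_mul _).const_add _ |>.congr_deriv (by ring)
  have hbound : ∀ s ∈ Ico (0 : ℝ) 1, ⟪f' (a + s • v), v⟫ - ⟪f' a, v⟫ ≤ L * s * ‖v‖ ^ 2 := by
    intro s hs
    calc ⟪f' (a + s • v), v⟫ - ⟪f' a, v⟫ = ⟪f' (a + s • v) - f' a, v⟫ := (inner_sub_left ..).symm
      _ ≤ ‖f' (a + s • v) - f' a‖ * ‖v‖ := real_inner_le_norm _ _
      _ ≤ L * ‖s • v‖ * ‖v‖ := by gcongr; simpa using hlip (a + s • v) a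
      _ = L * s * ‖v‖ ^ 2 := by rw [norm_smul, Real.norm_of_nonneg hs.1]; ring
  have h1 := image_le_of_deriv_right_le_deriv_boundary
    (fun s _ => (hφ s).continuousAt.continuousWithinAt) (fun s _ => (hφ s).hasDerivWithinAt)
    (by simp) (fun s _ => (hB s).continuousAt.continuousWithinAt)
    (fun s _ => (hB s).hasDerivWithinAt) hbound (right_mem_Icc.2 zero_le_one)
  simp only [one_smul, add_sub_cancel, one_mul, one_pow, mul_one, v] at h1
  linarith

end

theorem key_lemma_ii_general (n : ℕ) (L : ℝ)
    (f : EuclideanSpace ℝ (Fin n) → ℝ) (f' : EuclideanSpace ℝ (Fin n) → EuclideanSpace ℝ (Fin n))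
    (hf : ∀ x, HasGradientAt f (f' x) x)
    (hlip : ∀ x y, ‖f' x - f' y‖ ≤ L * ‖x - y‖)
    (g : EuclideanSpace ℝ (Fin n) → ℝ) (hg : ConvexOn ℝ Set.univ g)
    (x y : EuclideanSpace ℝ (Fin n)) (t : ℝ) (ht : 0 < t)
    (p : EuclideanSpace ℝ (Fin n))
    (hp : ∀ w, g p + ‖p - (x - t • f' y)‖ ^ 2 / (2 * t) ≤ g w + ‖w - (x - t • f' y)‖ ^ 2 / (2 * t))
    (z : EuclideanSpace ℝ (Fin n)) :
    (f z + g z) - (f p + g p) ≥ (1 / (2 * t)) * (‖x - p‖ ^ 2 + ‖z - p‖ ^ 2 - ‖x - z‖ ^ 2)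
      + ⟪y - z, f' y⟫ + f z - f y - (L / 2) * ‖p - y‖ ^ 2 := by
  have hdescent := le_add_inner_add_mul_sq_of_lipschitz_gradient hf hlip y p
  have hprox := hg.inner_sub_le_mul_sub_of_isMinOn_prox ht (isMinOn_univ_iff.2 hp) z
  rw [show x - t • f' y - p = (x - p) - t • f' y by abel, inner_sub_left,
    real_inner_smul_left] at hprox
  have hpolar : 1 / (2 * t) * (‖x - p‖ ^ 2 + ‖z - p‖ ^ 2 - ‖x - z‖ ^ 2) = ⟪x - p, z - p⟫ / t := by
    rw [show x - z = (x - p) - (z - p) by abel, norm_sub_sq_real (x - p)]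
    field_simp
    ring
  have hgrad : ⟪y - z, f' y⟫ = -⟪f' y, z - p⟫ - ⟪f' y, p - y⟫ := by
    simp only [inner_sub_right, real_inner_comm (f' y)]
    ring
  have hstep : ⟪x - p, z - p⟫ / t ≤ g z - g p + ⟪f' y, z - p⟫ := by
    rw [div_le_iff₀ ht]
    linarith
  linarith

theorem key_lemma_ii (n : ℕ) (L : ℝ) (hL : 0 < L)
    (f : EuclideanSpace ℝ (Fin n) → ℝ) (f' : EuclideanSpace ℝ (Fin n) → EuclideanSpace ℝ (Fin n))
    (hf : ∀ x, HasGradientAt f (f' x) x)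
    (hlip : ∀ x y, ‖f' x - f' y‖ ≤ L * ‖x - y‖)
    (g : EuclideanSpace ℝ (Fin n) → ℝ) (hg : ConvexOn ℝ Set.univ g)
    (x y : EuclideanSpace ℝ (Fin n)) (t : ℝ) (ht : 0 < t)
    (p : EuclideanSpace ℝ (Fin n))
    (hp : ∀ w, g p + ‖p - (x - t • f' y)‖ ^ 2 / (2 * t) ≤ g w + ‖w - (x - t • f' y)‖ ^ 2 / (2 * t))
    (z : EuclideanSpace ℝ (Fin n)) :
    (f z + g z) - (f p + g p) ≥ (1 / (2 * t)) * (‖x - p‖ ^ 2 + ‖z - p‖ ^ 2 - ‖x - z‖ ^ 2)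
      + ⟪y - z, f' y⟫ + f z - f y - (L / 2) * ‖p - y‖ ^ 2 :=
  key_lemma_ii_general n L f f' hf hlip g hg x y t ht p hp z
end

section
/- Let f : ℝ^n → ℝ be convex, differentiable with L-Lipschitz gradient, g : ℝ^n → ℝ convex, F = f + g. Fix x, y ∈ ℝ^n, t > 0, p = prox_{tg}(x - t∇f(y)). Then for any z ∈ ℝ^n: F(z) - F(p) ≥ (1/(2t))(‖x - p‖² + ‖z - p‖² - ‖x - z‖²) - (L/2)‖p - y‖². -/
/-!
Put `u = x - t • f' y`. Comparing `p` with the points of the segment `[p, z]` in the prox problem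
and using convexity of `g` gives `⟪u - p, z - p⟫ ≤ t (g z - g p)`. Convexity of `f` bounds `f z`
below by the linearisation of `f` at `y`, and the `L`-Lipschitz gradient bounds `f p` above by the
same linearisation plus `L/2 ‖p - y‖²` (the descent lemma). Adding the three inequalities, the
`f' y` terms cancel and what is left is `⟪x - p, z - p⟫ / t - L/2 ‖p - y‖²`; the polarisation
identity turns `2 ⟪x - p, z - p⟫` into `‖x - p‖² + ‖z - p‖² - ‖x - z‖²`.
-/

open scoped RealInnerProductSpace
open Set Filter Topology AffineMap

theorem nonneg_of_forall_mem_Ioo_nonneg_add_mul {a b : ℝ}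
    (h : ∀ s ∈ Ioo (0:ℝ) 1, 0 ≤ a + s * b) : 0 ≤ a := by
  have hlim : Tendsto (fun s : ℝ => a + s * b) (𝓝[>] 0) (𝓝 a) := by
    apply tendsto_nhdsWithin_of_tendsto_nhds
    simpa using (tendsto_const_nhds (x := a)).add ((tendsto_id (x := 𝓝 (0:ℝ))).mul_const b)
  refine ge_of_tendsto hlim ?_
  filter_upwards [Ioo_mem_nhdsGT one_pos] with s hs using h s hs

section InnerProductSpace

variable {E : Type*} [NormedAddCommGroup E] [InnerProductSpace ℝ E]

theorem inner_sub_le_of_forall_prox_le {g : E → ℝ} (hg : ConvexOn ℝ univ g) {t : ℝ} (ht : 0 < t)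
    {u p : E} (hp : ∀ w, g p + ‖p - u‖ ^ 2 / (2 * t) ≤ g w + ‖w - u‖ ^ 2 / (2 * t)) (z : E) :
    ⟪u - p, z - p⟫ ≤ t * (g z - g p) := by
  suffices 0 ≤ 2 * (t * (g z - g p) - ⟪u - p, z - p⟫) by linarith
  refine nonneg_of_forall_mem_Ioo_nonneg_add_mul (b := ‖z - p‖ ^ 2) fun s hs => ?_
  have hconv : g (lineMap p z s) ≤ (1 - s) * g p + s * g z := by
    simpa [lineMap_apply_module] using
      hg.2 (mem_univ p) (mem_univ z) (by linarith [hs.2]) hs.1.le (by ring)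
  have hsq : ‖lineMap p z s - u‖ ^ 2
      = ‖p - u‖ ^ 2 - 2 * s * ⟪u - p, z - p⟫ + s ^ 2 * ‖z - p‖ ^ 2 := by
    rw [lineMap_apply_module', show s • (z - p) + p - u = s • (z - p) - (u - p) by abel,
      norm_sub_sq_real, norm_smul, real_inner_smul_left, Real.norm_of_nonneg hs.1.le,
      norm_sub_rev u p, real_inner_comm (u - p)]
    ring
  have hmin := hp (lineMap p z s)
  rw [hsq] at hmin
  have key : 0 ≤ s * (2 * (t * (g z - g p) - ⟪u - p, z - p⟫) + s * ‖z - p‖ ^ 2) := by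
    have : s * (2 * (t * (g z - g p) - ⟪u - p, z - p⟫) + s * ‖z - p‖ ^ 2)
        = 2 * t * (s * (g z - g p)
          + (‖p - u‖ ^ 2 - 2 * s * ⟪u - p, z - p⟫ + s ^ 2 * ‖z - p‖ ^ 2) / (2 * t)
          - ‖p - u‖ ^ 2 / (2 * t)) := by
      field_simp; ring
    rw [this]
    exact mul_nonneg (by positivity) (by linarith)
  exact (mul_nonneg_iff_of_pos_left hs.1).1 key

variable [CompleteSpace E]

theorem HasGradientAt.hasDerivAt_comp_lineMap {f : E → ℝ} {f' y z : E} {s : ℝ}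
    (hf : HasGradientAt f f' (lineMap y z s)) :
    HasDerivAt (f ∘ lineMap y z) ⟪f', z - y⟫ s := by
  simpa using (hasGradientAt_iff_hasFDerivAt.1 hf).comp_hasDerivAt s hasDerivAt_lineMap

theorem ConvexOn.add_inner_le_of_hasGradientAt {f : E → ℝ} {f' y : E}
    (hfc : ConvexOn ℝ univ f) (hf : HasGradientAt f f' y) (z : E) :
    f y + ⟪f', z - y⟫ ≤ f z := by
  have hφ : ConvexOn ℝ univ (f ∘ lineMap y z) := hfc.comp_affineMap (lineMap y z)
  have hslope := hφ.le_slope_of_hasDerivAt (mem_univ 0) (mem_univ 1) one_pos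
    (HasGradientAt.hasDerivAt_comp_lineMap (by simpa using hf))
  simp only [slope_def_field, Function.comp_apply, lineMap_apply_one, lineMap_apply_zero,
    sub_zero, div_one] at hslope
  linarith

theorem le_add_inner_add_sq_of_norm_sub_gradient_le {f : E → ℝ} {f' : E → E} {L : ℝ}
    (hf : ∀ x, HasGradientAt f (f' x) x) (y : E)
    (hlip : ∀ w, ‖f' w - f' y‖ ≤ L * ‖w - y‖) (p : E) :
    f p ≤ f y + ⟪f' y, p - y⟫ + L / 2 * ‖p - y‖ ^ 2 := by
  set ψ : ℝ → ℝ := fun s => f (lineMap y p s) - s * ⟪f' y, p - y⟫ - L / 2 * s ^ 2 * ‖p - y‖ ^ 2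
  have hψ : ∀ s, HasDerivAt ψ
      (⟪f' (lineMap y p s), p - y⟫ - ⟪f' y, p - y⟫ - L * s * ‖p - y‖ ^ 2) s := by
    intro s
    have := (((hf _).hasDerivAt_comp_lineMap (y := y) (z := p) (s := s)).sub
      ((hasDerivAt_id s).mul_const ⟪f' y, p - y⟫)).sub
      (((hasDerivAt_pow 2 s).const_mul (L / 2)).mul_const (‖p - y‖ ^ 2))
    exact this.congr_deriv (by push_cast; ring)
  have hψ' : ∀ s ∈ interior (Icc (0:ℝ) 1),
      ⟪f' (lineMap y p s), p - y⟫ - ⟪f' y, p - y⟫ - L * s * ‖p - y‖ ^ 2 ≤ 0 := by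
    intro s hs
    rw [interior_Icc] at hs
    rw [sub_nonpos]
    have hdist : ‖lineMap y p s - y‖ = s * ‖p - y‖ := by
      rw [lineMap_apply_module', add_sub_cancel_right, norm_smul, Real.norm_of_nonneg hs.1.le]
    calc ⟪f' (lineMap y p s), p - y⟫ - ⟪f' y, p - y⟫
        = ⟪f' (lineMap y p s) - f' y, p - y⟫ := (inner_sub_left _ _ _).symm
      _ ≤ ‖f' (lineMap y p s) - f' y‖ * ‖p - y‖ := real_inner_le_norm _ _
      _ ≤ L * (s * ‖p - y‖) * ‖p - y‖ := by
          rw [← hdist]; exact mul_le_mul_of_nonneg_right (hlip _) (norm_nonneg _)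
      _ = L * s * ‖p - y‖ ^ 2 := by ring
  have hanti := antitoneOn_of_hasDerivWithinAt_nonpos (convex_Icc 0 1)
    (fun s _ => (hψ s).continuousAt.continuousWithinAt)
    (fun s _ => (hψ s).hasDerivWithinAt) hψ'
  have := hanti (left_mem_Icc.2 zero_le_one) (right_mem_Icc.2 zero_le_one) zero_le_one
  simp only [ψ, lineMap_apply_zero, lineMap_apply_one] at this
  linarith

end InnerProductSpace

theorem key_lemma_convex_general (n : ℕ) (L : ℝ)
    (f : EuclideanSpace ℝ (Fin n) → ℝ) (f' : EuclideanSpace ℝ (Fin n) → EuclideanSpace ℝ (Fin n))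
    (hfconv : ConvexOn ℝ Set.univ f)
    (hf : ∀ x, HasGradientAt f (f' x) x)
    (hlip : ∀ x y, ‖f' x - f' y‖ ≤ L * ‖x - y‖)
    (g : EuclideanSpace ℝ (Fin n) → ℝ) (hg : ConvexOn ℝ Set.univ g)
    (x y : EuclideanSpace ℝ (Fin n)) (t : ℝ) (ht : 0 < t)
    (p : EuclideanSpace ℝ (Fin n))
    (hp : ∀ w, g p + ‖p - (x - t • f' y)‖ ^ 2 / (2 * t) ≤ g w + ‖w - (x - t • f' y)‖ ^ 2 / (2 * t))
    (z : EuclideanSpace ℝ (Fin n)) :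
    (f z + g z) - (f p + g p) ≥ (1 / (2 * t)) * (‖x - p‖ ^ 2 + ‖z - p‖ ^ 2 - ‖x - z‖ ^ 2)
      - (L / 2) * ‖p - y‖ ^ 2 := by
  have hlower := hfconv.add_inner_le_of_hasGradientAt (hf y) z
  have hupper := le_add_inner_add_sq_of_norm_sub_gradient_le hf y (fun w => hlip w y) p
  have hprox := inner_sub_le_of_forall_prox_le hg ht hp z
  have hsplit : ⟪x - t • f' y - p, z - p⟫
      = ⟪x - p, z - p⟫ - t * (⟪f' y, z - y⟫ - ⟪f' y, p - y⟫) := by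
    rw [← inner_sub_right, show z - y - (p - y) = z - p by abel,
      show x - t • f' y - p = (x - p) - t • f' y by abel, inner_sub_left, real_inner_smul_left]
  have hpolar : ‖x - p‖ ^ 2 + ‖z - p‖ ^ 2 - ‖x - z‖ ^ 2 = 2 * ⟪x - p, z - p⟫ := by
    rw [show x - z = (x - p) - (z - p) by abel, norm_sub_sq_real (x - p) (z - p)]
    ring
  have hgap : ⟪x - p, z - p⟫ / t ≤ g z - g p + (⟪f' y, z - y⟫ - ⟪f' y, p - y⟫) := by
    rw [div_le_iff₀ ht]
    linarith
  rw [hpolar, show 1 / (2 * t) * (2 * ⟪x - p, z - p⟫) = ⟪x - p, z - p⟫ / t by field_simp]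
  linarith

theorem key_lemma_convex (n : ℕ) (L : ℝ) (hL : 0 < L)
    (f : EuclideanSpace ℝ (Fin n) → ℝ) (f' : EuclideanSpace ℝ (Fin n) → EuclideanSpace ℝ (Fin n))
    (hfconv : ConvexOn ℝ Set.univ f)
    (hf : ∀ x, HasGradientAt f (f' x) x)
    (hlip : ∀ x y, ‖f' x - f' y‖ ≤ L * ‖x - y‖)
    (g : EuclideanSpace ℝ (Fin n) → ℝ) (hg : ConvexOn ℝ Set.univ g)
    (x y : EuclideanSpace ℝ (Fin n)) (t : ℝ) (ht : 0 < t)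
    (p : EuclideanSpace ℝ (Fin n))
    (hp : ∀ w, g p + ‖p - (x - t • f' y)‖ ^ 2 / (2 * t) ≤ g w + ‖w - (x - t • f' y)‖ ^ 2 / (2 * t))
    (z : EuclideanSpace ℝ (Fin n)) :
    (f z + g z) - (f p + g p) ≥ (1 / (2 * t)) * (‖x - p‖ ^ 2 + ‖z - p‖ ^ 2 - ‖x - z‖ ^ 2)
      - (L / 2) * ‖p - y‖ ^ 2 :=
  key_lemma_convex_general n L f f' hfconv hf hlip g hg x y t ht p hp z
end

section
/- Let f be differentiable with L-Lipschitz gradient, g : ℝ^n → ℝ convex, and 0 < s ≤ α with Ls < 1. Define y = prox_{sg}(x - s∇f(x)), x⁺ = prox_{αg}(x - α∇f(y)), z = prox_{sg}(x - s∇f(y)). Then (s/α)‖x - x⁺‖ ≤ ‖x - z‖ ≤ ‖x - x⁺‖. -/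
open scoped RealInnerProductSpace

set_option maxHeartbeats 1000000

lemma prox_subgrad_aux {n : ℕ} (g : EuclideanSpace ℝ (Fin n) → ℝ)
    (hg : ConvexOn ℝ Set.univ g) (t : ℝ) (ht : 0 < t)
    (v p : EuclideanSpace ℝ (Fin n))
    (hp : ∀ w, g p + ‖p - v‖ ^ 2 / (2 * t) ≤ g w + ‖w - v‖ ^ 2 / (2 * t))
    (w : EuclideanSpace ℝ (Fin n)) :
    ⟪v - p, w - p⟫ ≤ t * (g w - g p) := by
  apply le_of_forall_pos_le_add
  intro ε hε
  set lam : ℝ := min 1 (2 * ε / (‖w - p‖ ^ 2 + 1)) with hlam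
  have hnp : (0:ℝ) < ‖w - p‖ ^ 2 + 1 := by positivity
  have hlam0 : 0 < lam := lt_min one_pos (by positivity)
  have hlam1 : lam ≤ 1 := min_le_left _ _
  have hlamε : lam * ‖w - p‖ ^ 2 / 2 ≤ ε := by
    have h2 : lam ≤ 2 * ε / (‖w - p‖ ^ 2 + 1) := min_le_right _ _
    have h3 : lam * (‖w - p‖ ^ 2 + 1) ≤ 2 * ε := by
      rw [le_div_iff₀ hnp] at h2
      linarith
    nlinarith [sq_nonneg ‖w - p‖, hlam0]
  -- convexity
  have hconv := hg.2 (Set.mem_univ p) (Set.mem_univ w) (by linarith : (0:ℝ) ≤ 1 - lam)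
      (le_of_lt hlam0) (by ring)
  have heq : (1 - lam) • p + lam • w = p + lam • (w - p) := by module
  rw [heq] at hconv
  simp only [smul_eq_mul] at hconv
  -- prox inequality at p + lam • (w - p)
  have hineq := hp (p + lam • (w - p))
  have hnorm : ‖p + lam • (w - p) - v‖ ^ 2
      = ‖p - v‖ ^ 2 + 2 * (lam * ⟪p - v, w - p⟫) + lam ^ 2 * ‖w - p‖ ^ 2 := by
    have h1 : p + lam • (w - p) - v = (p - v) + lam • (w - p) := by module
    rw [h1, norm_add_sq_real, real_inner_smul_right, norm_smul]
    simp [abs_of_pos hlam0]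
    ring
  rw [hnorm] at hineq
  have hinner : ⟪v - p, w - p⟫ = -⟪p - v, w - p⟫ := by
    have hvp : v - p = -(p - v) := by module
    rw [hvp, inner_neg_left]
  rw [hinner]
  have h2t : (0:ℝ) < 2 * t := by linarith
  have hsplit : (‖p - v‖ ^ 2 + 2 * (lam * ⟪p - v, w - p⟫) + lam ^ 2 * ‖w - p‖ ^ 2) / (2 * t)
      = ‖p - v‖ ^ 2 / (2 * t)
        + (2 * (lam * ⟪p - v, w - p⟫) + lam ^ 2 * ‖w - p‖ ^ 2) / (2 * t) := by ring
  rw [hsplit] at hineq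
  have key2 : lam * (g p - g w)
      ≤ (2 * (lam * ⟪p - v, w - p⟫) + lam ^ 2 * ‖w - p‖ ^ 2) / (2 * t) := by
    linarith [hineq, hconv]
  have step : lam * (g p - g w) * (2 * t)
      ≤ 2 * (lam * ⟪p - v, w - p⟫) + lam ^ 2 * ‖w - p‖ ^ 2 :=
    (le_div_iff₀ h2t).mp key2
  have h5 : (2 * lam) * (t * (g p - g w))
      ≤ (2 * lam) * (⟪p - v, w - p⟫ + lam * ‖w - p‖ ^ 2 / 2) := by linarith [step]
  have h6 : t * (g p - g w) ≤ ⟪p - v, w - p⟫ + lam * ‖w - p‖ ^ 2 / 2 :=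
    le_of_mul_le_mul_left h5 (by positivity)
  linarith [h6, hlamε]

theorem intermediate_point_bounds (n : ℕ) (L : ℝ) (hL : 0 < L)
    (f : EuclideanSpace ℝ (Fin n) → ℝ) (f' : EuclideanSpace ℝ (Fin n) → EuclideanSpace ℝ (Fin n))
    (hf : ∀ x, HasGradientAt f (f' x) x)
    (hlip : ∀ x y, ‖f' x - f' y‖ ≤ L * ‖x - y‖)
    (g : EuclideanSpace ℝ (Fin n) → ℝ) (hg : ConvexOn ℝ Set.univ g)
    (s α : ℝ) (hs : 0 < s) (hsα : s ≤ α) (hsL : L * s < 1)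
    (x y xp z : EuclideanSpace ℝ (Fin n))
    (hy : ∀ w, g y + ‖y - (x - s • f' x)‖ ^ 2 / (2 * s) ≤ g w + ‖w - (x - s • f' x)‖ ^ 2 / (2 * s))
    (hxp : ∀ w, g xp + ‖xp - (x - α • f' y)‖ ^ 2 / (2 * α) ≤ g w + ‖w - (x - α • f' y)‖ ^ 2 / (2 * α))
    (hz : ∀ w, g z + ‖z - (x - s • f' y)‖ ^ 2 / (2 * s) ≤ g w + ‖w - (x - s • f' y)‖ ^ 2 / (2 * s)) :
    (s / α) * ‖x - xp‖ ≤ ‖x - z‖ ∧ ‖x - z‖ ≤ ‖x - xp‖ := by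
  have hα : 0 < α := lt_of_lt_of_le hs hsα
  set u := f' y
  have h1 := prox_subgrad_aux g hg s hs (x - s • u) z hz xp
  have h2 := prox_subgrad_aux g hg α hα (x - α • u) xp hxp z
  set a := x - z with ha
  set b := x - xp with hb
  have e1 : x - s • u - z = a - s • u := by rw [ha]; module
  have e2 : xp - z = a - b := by rw [ha, hb]; module
  have e3 : x - α • u - xp = b - α • u := by rw [hb]; module
  have e4 : z - xp = b - a := by rw [ha, hb]; module
  rw [e1, e2] at h1
  rw [e3, e4] at h2
  have exp1 : ⟪a - s • u, a - b⟫ = ⟪a, a⟫ - ⟪a, b⟫ - s * ⟪u, a⟫ + s * ⟪u, b⟫ := by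
    simp only [inner_sub_left, inner_sub_right, real_inner_smul_left]
    ring
  have exp2 : ⟪b - α • u, b - a⟫ = ⟪b, b⟫ - ⟪b, a⟫ - α * ⟪u, b⟫ + α * ⟪u, a⟫ := by
    simp only [inner_sub_left, inner_sub_right, real_inner_smul_left]
    ring
  have hab : ⟪b, a⟫ = ⟪a, b⟫ := real_inner_comm a b
  have haa : ⟪a, a⟫ = ‖a‖ ^ 2 := real_inner_self_eq_norm_sq a
  have hbb : ⟪b, b⟫ = ‖b‖ ^ 2 := real_inner_self_eq_norm_sq b
  have combo : α * ‖a‖ ^ 2 + s * ‖b‖ ^ 2 ≤ (α + s) * ⟪a, b⟫ := by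
    have c1 := mul_le_mul_of_nonneg_left h1 hα.le
    have c2 := mul_le_mul_of_nonneg_left h2 hs.le
    rw [exp1] at c1
    rw [exp2, hab] at c2
    nlinarith [c1, c2]
  have hCS : ⟪a, b⟫ ≤ ‖a‖ * ‖b‖ := real_inner_le_norm a b
  have hA : (0:ℝ) ≤ ‖a‖ := norm_nonneg a
  have hB : (0:ℝ) ≤ ‖b‖ := norm_nonneg b
  have F1 : α * ‖a‖ ^ 2 + s * ‖b‖ ^ 2 ≤ (α + s) * (‖a‖ * ‖b‖) := by
    have hmono := mul_le_mul_of_nonneg_left hCS (by linarith : (0:ℝ) ≤ α + s)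
    linarith [combo, hmono]
  have hP : (‖a‖ - ‖b‖) * (α * ‖a‖ - s * ‖b‖) ≤ 0 := by nlinarith [F1]
  constructor
  · rw [div_mul_eq_mul_div, div_le_iff₀ hα]
    by_contra hcon
    push_neg at hcon
    -- hcon : ‖a‖ * α < s * ‖b‖
    have hAB : 0 ≤ ‖a‖ - ‖b‖ := by
      by_contra h7
      push_neg at h7
      nlinarith [hP, hcon]
    have d1 : s * ‖b‖ ≤ s * ‖a‖ := by nlinarith [hAB, hs]
    have d2 : s * ‖a‖ ≤ α * ‖a‖ := mul_le_mul_of_nonneg_right hsα hA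
    linarith
  · by_contra hcon
    push_neg at hcon
    -- hcon : ‖x - xp‖ < ‖x - z‖, i.e. ‖b‖ < ‖a‖
    have h1' : α * ‖a‖ - s * ‖b‖ ≤ 0 := by
      by_contra h7
      push_neg at h7
      nlinarith [hP, hcon]
    have d1 : s * ‖b‖ ≤ α * ‖b‖ := mul_le_mul_of_nonneg_right hsα hB
    have d2 : α * ‖a‖ ≤ α * ‖b‖ := by linarith
    have := le_of_mul_le_mul_left d2 hα
    linarith
end

section
/- Let f be differentiable with L-Lipschitz gradient, g : ℝ^n → ℝ convex, and 0 < s ≤ α with Ls < 1. With y = prox_{sg}(x - s∇f(x)) and x⁺ = prox_{αg}(x - α∇f(y)), one has ‖x⁺ - y‖ ≤ (1/(1 - Ls) - s/α)‖x - x⁺‖. -/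
/-!
Write `u = x - x⁺` and `v = y - x⁺`. Both points are proximal steps for the same convex `g`, so
the two optimality conditions add up to a monotonicity inequality; combined with the Lipschitz
bound on `f'` it reads `‖v‖² ≤ m ⟪u, v⟫ + r ‖v‖ ‖u - v‖` with `m = 1 - s/α` and `r = L s`.
By Cauchy–Schwarz this gives `‖v‖ ≤ m ‖u‖ + r ‖u - v‖`, and the same inequality also forces
`(1 - r) ‖x - y‖ ≤ ‖x - x⁺‖`; eliminating `‖x - y‖` yields the factor `m + r / (1 - r)`.
-/

open scoped RealInnerProductSpace

open Set Filter Topology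

lemma nonpos_of_forall_le_mul_s9 {a b : ℝ} (h : ∀ τ ∈ Ioc (0 : ℝ) 1, a ≤ τ * b) : a ≤ 0 := by
  have hlim : Tendsto (fun τ : ℝ => τ * b) (𝓝[>] 0) (𝓝 0) :=
    ((continuous_mul_const b).tendsto' 0 0 (zero_mul b)).mono_left nhdsWithin_le_nhds
  exact ge_of_tendsto hlim (mem_of_superset (Ioc_mem_nhdsGT zero_lt_one) h)

section

variable {E : Type*} [NormedAddCommGroup E] [InnerProductSpace ℝ E]

/-- `z = prox_{t g}(q)`. -/
def IsProx (g : E → ℝ) (t : ℝ) (q z : E) : Prop :=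
  ∀ w, g z + ‖z - q‖ ^ 2 / (2 * t) ≤ g w + ‖w - q‖ ^ 2 / (2 * t)

lemma IsProx.inner_le {g : E → ℝ} {t : ℝ} {q z : E} (hz : IsProx g t q z) (ht : 0 < t)
    (hg : ConvexOn ℝ univ g) (w : E) : ⟪q - z, w - z⟫ ≤ t * (g w - g z) := by
  suffices t * (g z - g w) - ⟪z - q, w - z⟫ ≤ 0 by
    rw [← neg_sub z q, inner_neg_left]; linarith
  -- compare `z` with the points `(1 - τ) • z + τ • w` of the segment towards `w`, then let `τ → 0`
  refine nonpos_of_forall_le_mul_s9 (b := ‖w - z‖ ^ 2 / 2) fun τ ⟨hτ0, hτ1⟩ => ?_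
  have hconv := hg.2 (mem_univ z) (mem_univ w) (sub_nonneg.2 hτ1) hτ0.le (sub_add_cancel 1 τ)
  have hmin := hz ((1 - τ) • z + τ • w)
  have hexp : ‖(1 - τ) • z + τ • w - q‖ ^ 2
      = ‖z - q‖ ^ 2 + 2 * τ * ⟪z - q, w - z⟫ + τ ^ 2 * ‖w - z‖ ^ 2 := by
    rw [show (1 - τ) • z + τ • w - q = (z - q) + τ • (w - z) by module,
      norm_add_sq_real, real_inner_smul_right, norm_smul, Real.norm_eq_abs, mul_pow, sq_abs]
    ring
  rw [hexp] at hmin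
  simp only [smul_eq_mul] at hconv
  have h2t : 0 ≤ 2 * t := by positivity
  have hmin' := mul_le_mul_of_nonneg_left hmin h2t
  field_simp at hmin'
  have hconv' := mul_le_mul_of_nonneg_left hconv h2t
  refine le_of_mul_le_mul_left ?_ (by positivity : (0 : ℝ) < 2 * τ)
  linarith

lemma IsProx.inner_nonneg {g : E → ℝ} {t₁ t₂ : ℝ} {q₁ q₂ z₁ z₂ : E} (hz₁ : IsProx g t₁ q₁ z₁)
    (hz₂ : IsProx g t₂ q₂ z₂) (ht₁ : 0 < t₁) (ht₂ : 0 < t₂) (hg : ConvexOn ℝ univ g) :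
    0 ≤ ⟪t₂ • (q₁ - z₁) - t₁ • (q₂ - z₂), z₁ - z₂⟫ := by
  have h₁ := hz₁.inner_le ht₁ hg z₂
  have h₂ := hz₂.inner_le ht₂ hg z₁
  rw [← neg_sub z₁ z₂, inner_neg_right] at h₁
  rw [inner_sub_left, real_inner_smul_left, real_inner_smul_left]
  nlinarith [mul_le_mul_of_nonneg_left h₁ ht₂.le, mul_le_mul_of_nonneg_left h₂ ht₁.le]

section

variable {m r : ℝ} {u v : E}

lemma norm_le_of_sq_le_inner (hm : 0 ≤ m) (hr : 0 ≤ r)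
    (h : ‖v‖ ^ 2 ≤ m * ⟪u, v⟫ + r * ‖v‖ * ‖u - v‖) : ‖v‖ ≤ m * ‖u‖ + r * ‖u - v‖ := by
  have hcs : m * ⟪u, v⟫ ≤ m * (‖u‖ * ‖v‖) :=
    mul_le_mul_of_nonneg_left (real_inner_le_norm u v) hm
  rcases (norm_nonneg v).eq_or_lt with hv | hv
  · rw [← hv]; positivity
  · refine le_of_mul_le_mul_left ?_ hv
    nlinarith

lemma one_sub_mul_norm_sub_le (hm₀ : 0 ≤ m) (hm₁ : m ≤ 1) (hr₀ : 0 ≤ r) (hr₁ : r ≤ 1)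
    (h : ‖v‖ ^ 2 ≤ m * ⟪u, v⟫ + r * ‖v‖ * ‖u - v‖) : (1 - r) * ‖u - v‖ ≤ ‖u‖ := by
  have htri : ‖u - v‖ ≤ ‖u‖ + ‖v‖ := norm_sub_le u v
  rcases le_or_gt ‖v‖ (r * ‖u - v‖) with hv | hv
  · linarith
  · -- here `⟪u, v⟫ > 0`, so `m ≤ 1` gives a lower bound on `⟪u, v⟫` and
    -- `‖u - v‖² = ‖u‖² - 2 ⟪u, v⟫ + ‖v‖² ≤ ‖u‖² + r² ‖u - v‖²`
    have hc : ‖v‖ ^ 2 - r * ‖v‖ * ‖u - v‖ ≤ ⟪u, v⟫ := by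
      have hpos : 0 < m * ⟪u, v⟫ := by
        have := mul_pos (hv.trans_le' (by positivity)) (sub_pos.2 hv)
        nlinarith
      have : 0 < ⟪u, v⟫ := pos_of_mul_pos_right hpos hm₀
      nlinarith
    have hexp : ‖u - v‖ ^ 2 = ‖u‖ ^ 2 - 2 * ⟪u, v⟫ + ‖v‖ ^ 2 := norm_sub_sq_real u v
    have hsq : ((1 - r) * ‖u - v‖) ^ 2 ≤ ‖u‖ ^ 2 := by
      nlinarith [sq_nonneg (‖v‖ - r * ‖u - v‖), mul_nonneg hr₀ (sub_nonneg.2 hr₁)]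
    exact abs_le_of_sq_le_sq' hsq (norm_nonneg u) |>.2

lemma norm_le_of_sq_le_inner_of_lt_one (hm₀ : 0 ≤ m) (hm₁ : m ≤ 1) (hr₀ : 0 ≤ r) (hr₁ : r < 1)
    (h : ‖v‖ ^ 2 ≤ m * ⟪u, v⟫ + r * ‖v‖ * ‖u - v‖) : ‖v‖ ≤ (m + r / (1 - r)) * ‖u‖ := by
  have h₁ := norm_le_of_sq_le_inner hm₀ hr₀ h
  have h₂ := one_sub_mul_norm_sub_le hm₀ hm₁ hr₀ hr₁.le h
  have h₃ : r * ‖u - v‖ ≤ r / (1 - r) * ‖u‖ := by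
    rw [div_mul_eq_mul_div, le_div_iff₀ (sub_pos.2 hr₁)]
    nlinarith
  linarith

end

lemma sq_norm_le_of_isProx {L : ℝ} {F : E → E} (hF : ∀ a b, ‖F a - F b‖ ≤ L * ‖a - b‖)
    {g : E → ℝ} (hg : ConvexOn ℝ univ g) {s α : ℝ} (hs : 0 < s) (hsα : s ≤ α) {x y xp : E} (hy : IsProx g s (x - s • F x) y)
    (hxp : IsProx g α (x - α • F y) xp) :
    ‖y - xp‖ ^ 2 ≤ (1 - s / α) * ⟪x - xp, y - xp⟫
      + L * s * ‖y - xp‖ * ‖(x - xp) - (y - xp)‖ := by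
  have hα : 0 < α := hs.trans_le hsα
  have hmono := hxp.inner_nonneg hy hα hs hg
  have hvec : s • (x - α • F y - xp) - α • (x - s • F x - y)
      = α • (y - xp) - (α - s) • (x - xp) + (s * α) • (F x - F y) := by
    module
  rw [hvec, ← neg_sub y xp, inner_neg_right, inner_add_left, inner_sub_left,
    real_inner_smul_left, real_inner_smul_left, real_inner_smul_left,
    real_inner_self_eq_norm_sq] at hmono
  have hlip : -(L * ‖(x - xp) - (y - xp)‖ * ‖y - xp‖) ≤ ⟪F x - F y, y - xp⟫ := by
    rw [sub_sub_sub_cancel_right]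
    exact (neg_le_neg (mul_le_mul_of_nonneg_right (hF x y) (norm_nonneg _))).trans
      (neg_le_of_abs_le (abs_real_inner_le_norm _ _))
  refine le_of_mul_le_mul_left ?_ hα
  have hα_mul : α * ((1 - s / α) * ⟪x - xp, y - xp⟫ + L * s * ‖y - xp‖ * ‖(x - xp) - (y - xp)‖)
      = (α - s) * ⟪x - xp, y - xp⟫ + s * α * (L * ‖(x - xp) - (y - xp)‖ * ‖y - xp‖) := by
    field_simp
  rw [hα_mul]
  nlinarith [mul_le_mul_of_nonneg_left hlip (mul_pos hs hα).le]

end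

theorem xp_y_bound_general (n : ℕ) (L : ℝ) (hL : 0 < L)
    (f' : EuclideanSpace ℝ (Fin n) → EuclideanSpace ℝ (Fin n))
    (hlip : ∀ x y, ‖f' x - f' y‖ ≤ L * ‖x - y‖)
    (g : EuclideanSpace ℝ (Fin n) → ℝ) (hg : ConvexOn ℝ Set.univ g)
    (s α : ℝ) (hs : 0 < s) (hsα : s ≤ α) (hsL : L * s < 1)
    (x y xp : EuclideanSpace ℝ (Fin n))
    (hy : ∀ w, g y + ‖y - (x - s • f' x)‖ ^ 2 / (2 * s) ≤ g w + ‖w - (x - s • f' x)‖ ^ 2 / (2 * s))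
    (hxp : ∀ w, g xp + ‖xp - (x - α • f' y)‖ ^ 2 / (2 * α) ≤ g w + ‖w - (x - α • f' y)‖ ^ 2 / (2 * α)) :
    ‖xp - y‖ ≤ (1 / (1 - L * s) - s / α) * ‖x - xp‖ := by
  have hα : 0 < α := hs.trans_le hsα
  have hkey := sq_norm_le_of_isProx hlip hg hs hsα hy hxp
  have hm₀ : 0 ≤ 1 - s / α := sub_nonneg.2 ((div_le_one hα).2 hsα)
  have hm₁ : 1 - s / α ≤ 1 := sub_le_self _ (div_pos hs hα).le
  have hbound := norm_le_of_sq_le_inner_of_lt_one hm₀ hm₁ (mul_pos hL hs).le hsL hkey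
  have hcoeff : 1 - s / α + L * s / (1 - L * s) = 1 / (1 - L * s) - s / α := by
    rw [sub_add_eq_add_sub, one_add_div (sub_pos.2 hsL).ne', sub_add_cancel]
  rwa [norm_sub_rev, ← hcoeff]

theorem xp_y_bound (n : ℕ) (L : ℝ) (hL : 0 < L)
    (f : EuclideanSpace ℝ (Fin n) → ℝ) (f' : EuclideanSpace ℝ (Fin n) → EuclideanSpace ℝ (Fin n))
    (hf : ∀ x, HasGradientAt f (f' x) x)
    (hlip : ∀ x y, ‖f' x - f' y‖ ≤ L * ‖x - y‖)
    (g : EuclideanSpace ℝ (Fin n) → ℝ) (hg : ConvexOn ℝ Set.univ g)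
    (s α : ℝ) (hs : 0 < s) (hsα : s ≤ α) (hsL : L * s < 1)
    (x y xp : EuclideanSpace ℝ (Fin n))
    (hy : ∀ w, g y + ‖y - (x - s • f' x)‖ ^ 2 / (2 * s) ≤ g w + ‖w - (x - s • f' x)‖ ^ 2 / (2 * s))
    (hxp : ∀ w, g xp + ‖xp - (x - α • f' y)‖ ^ 2 / (2 * α) ≤ g w + ‖w - (x - α • f' y)‖ ^ 2 / (2 * α)) :
    ‖xp - y‖ ≤ (1 / (1 - L * s) - s / α) * ‖x - xp‖ :=
  xp_y_bound_general n L hL f' hlip g hg s α hs hsα hsL x y xp hy hxp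
end

section
/- For real numbers L > 0, s, α with 0 < s ≤ 1/(2L) and s ≤ α ≤ 1/L - s, one has (1/α) - L(1/(1 - Ls) - s/α)² ≥ 0. -/
open scoped RealInnerProductSpace

theorem step_size_C2_ineq (L s α : ℝ) (hL : 0 < L) (hs0 : 0 < s) (hs : s ≤ 1 / (2 * L))
    (hsα : s ≤ α) (hα : α ≤ 1 / L - s) :
    1 / α - L * (1 / (1 - L * s) - s / α) ^ 2 ≥ 0 := by
  have hα0 : 0 < α := lt_of_lt_of_le hs0 hsα
  have ht : L * s ≤ 1 / 2 := by
    rw [le_div_iff₀ (by positivity)] at hs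
    nlinarith
  have h1 : 0 < 1 - L * s := by linarith
  have hLα : L * α ≤ 1 - L * s := by
    have := mul_le_mul_of_nonneg_left hα hL.le
    have hinv : L * (1 / L) = 1 := mul_one_div_cancel hL.ne'
    nlinarith
  have key : α * (1 - L * s) ^ 2 - L * (α - s * (1 - L * s)) ^ 2 ≥ 0 := by
    nlinarith [mul_nonneg (sub_nonneg.2 hsα) (by linarith : (1 - L * s) - L * α ≥ 0),
      mul_pos hL hs0, mul_pos hα0 hL, mul_nonneg hs0.le (by linarith : 1 - 2 * (L * s) ≥ 0),
      mul_nonneg (mul_nonneg hs0.le hL.le) (sub_nonneg.2 hsα)]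
  have e : 1 / α - L * (1 / (1 - L * s) - s / α) ^ 2
      = (α * (1 - L * s) ^ 2 - L * (α - s * (1 - L * s)) ^ 2) / (α ^ 2 * (1 - L * s) ^ 2) := by
    field_simp
  rw [e]
  positivity
end

section
/- Let L > 0 and 0 < s₋ ≤ s with s ≤ (√5 - 1)/(2L), and suppose s ≤ α ≤ 2/L - 2s - (1 - Ls)Ls². Then (1/α) - (L/2)(1/(1 - Ls) - s/α)² ≥ L³s₋²(1 + Ls₋)/(2(2 - L²s₋²)²(1 - Ls₋)) > 0. -/
open scoped RealInnerProductSpace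

set_option maxHeartbeats 1000000

theorem step_size_C3_bound (L sm s α : ℝ) (hL : 0 < L) (hsm : 0 < sm) (hsms : sm ≤ s)
    (hs : s ≤ (Real.sqrt 5 - 1) / (2 * L)) (hsα : s ≤ α)
    (hα : α ≤ 2 / L - 2 * s - (1 - L * s) * L * s ^ 2) :
    1 / α - (L / 2) * (1 / (1 - L * s) - s / α) ^ 2
        ≥ L ^ 3 * sm ^ 2 * (1 + L * sm) / (2 * (2 - L ^ 2 * sm ^ 2) ^ 2 * (1 - L * sm)) ∧
      0 < L ^ 3 * sm ^ 2 * (1 + L * sm) / (2 * (2 - L ^ 2 * sm ^ 2) ^ 2 * (1 - L * sm)) := by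
  have hs0 : 0 < s := lt_of_lt_of_le hsm hsms
  have hα0 : 0 < α := lt_of_lt_of_le hs0 hsα
  have hsqrt : Real.sqrt 5 < 3 := by
    nlinarith [Real.sq_sqrt (by norm_num : (0:ℝ) ≤ 5), Real.sqrt_nonneg 5]
  have ht : L * s < 1 := by
    have h := mul_le_mul_of_nonneg_left hs (le_of_lt hL)
    have h2 : L * ((Real.sqrt 5 - 1) / (2 * L)) = (Real.sqrt 5 - 1) / 2 := by
      field_simp
    rw [h2] at h
    linarith
  have htm : L * sm < 1 :=
    lt_of_le_of_lt (by nlinarith : L * sm ≤ L * s) ht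
  have h1s : 0 < 1 - L * s := by linarith
  have h1sm : 0 < 1 - L * sm := by linarith
  have ht0 : 0 < L * s := mul_pos hL hs0
  have htm0 : 0 < L * sm := mul_pos hL hsm
  have h2s : 0 < 2 - L ^ 2 * s ^ 2 := by nlinarith [mul_lt_mul_of_pos_left ht ht0]
  have h2sm : 0 < 2 - L ^ 2 * sm ^ 2 := by nlinarith [mul_lt_mul_of_pos_left htm htm0]
  -- step 1 : lower bound with s in place of sm
  have key1 : 1 / α - (L / 2) * (1 / (1 - L * s) - s / α) ^ 2
      ≥ L ^ 3 * s ^ 2 * (1 + L * s) / (2 * (2 - L ^ 2 * s ^ 2) ^ 2 * (1 - L * s)) := by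
    rw [ge_iff_le, ← sub_nonneg]
    have hid : 1 / α - (L / 2) * (1 / (1 - L * s) - s / α) ^ 2
        - L ^ 3 * s ^ 2 * (1 + L * s) / (2 * (2 - L ^ 2 * s ^ 2) ^ 2 * (1 - L * s))
        = (((1 - L * s) * (2 - (L * s) ^ 2) - L * α)
            * ((4 - 3 * (L * s) ^ 2) * α - L * s ^ 2 * (1 - L * s) * (2 - (L * s) ^ 2)))
          / (2 * α ^ 2 * (1 - L * s) ^ 2 * (2 - (L * s) ^ 2) ^ 2) := by
      have hαne : α ≠ 0 := ne_of_gt hα0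
      have h1ne : (1 - L * s) ≠ 0 := ne_of_gt h1s
      have h2ne : (2 - (L * s) ^ 2) ≠ 0 := by nlinarith
      field_simp
      ring
    rw [hid]
    apply div_nonneg _ (by positivity)
    apply mul_nonneg
    · have h := mul_le_mul_of_nonneg_left hα (le_of_lt hL)
      have h2 : L * (2 / L - 2 * s - (1 - L * s) * L * s ^ 2)
          = 2 - 2 * (L * s) - (1 - L * s) * (L * s) ^ 2 := by
        field_simp
      rw [h2] at h
      nlinarith
    · have h43 : 0 < 4 - 3 * (L * s) ^ 2 := by
        nlinarith [mul_lt_mul_of_pos_left ht ht0]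
      have hpos : 0 < 4 - 2 * (L * s) - (L * s) ^ 2 + (L * s) ^ 3 - (L * s) ^ 4 := by
        nlinarith [mul_pos (pow_pos ht0 3) h1s, mul_lt_mul_of_pos_left ht ht0]
      nlinarith [mul_pos hs0 hpos, mul_le_mul_of_nonneg_left hsα h43.le]
  -- step 2 : monotonicity in sm
  have key2 : L ^ 3 * sm ^ 2 * (1 + L * sm) / (2 * (2 - L ^ 2 * sm ^ 2) ^ 2 * (1 - L * sm))
      ≤ L ^ 3 * s ^ 2 * (1 + L * s) / (2 * (2 - L ^ 2 * s ^ 2) ^ 2 * (1 - L * s)) := by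
    rw [div_le_div_iff₀ (by positivity) (by positivity)]
    have hA : sm ^ 2 * (1 + L * sm) ≤ s ^ 2 * (1 + L * s) := by
      have h2' := pow_le_pow_left₀ hsm.le hsms 2
      have h3' := mul_le_mul_of_nonneg_left (pow_le_pow_left₀ hsm.le hsms 3) hL.le
      nlinarith [h2', h3']
    have hB : (1 - L * s) * (2 - L ^ 2 * s ^ 2) ^ 2
        ≤ (1 - L * sm) * (2 - L ^ 2 * sm ^ 2) ^ 2 := by
      have c1 : 2 - L ^ 2 * s ^ 2 ≤ 2 - L ^ 2 * sm ^ 2 := by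
        nlinarith [pow_le_pow_left₀ hsm.le hsms 2, sq_nonneg L]
      have c2 : (2 - L ^ 2 * s ^ 2) ^ 2 ≤ (2 - L ^ 2 * sm ^ 2) ^ 2 :=
        pow_le_pow_left₀ h2s.le c1 2
      have c3 : 1 - L * s ≤ 1 - L * sm := by nlinarith
      exact mul_le_mul c3 c2 (by positivity) h1sm.le
    have hprod : (sm ^ 2 * (1 + L * sm)) * ((1 - L * s) * (2 - L ^ 2 * s ^ 2) ^ 2)
        ≤ (s ^ 2 * (1 + L * s)) * ((1 - L * sm) * (2 - L ^ 2 * sm ^ 2) ^ 2) := by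
      apply mul_le_mul hA hB (by positivity) (by positivity)
    have h := mul_le_mul_of_nonneg_left hprod (by positivity : (0:ℝ) ≤ 2 * L ^ 3)
    nlinarith [h]
  constructor
  · exact le_trans key2 key1
  · positivity
end
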